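/- Let R be a Prüfer domain and let φ : E → H be an R-linear map between finitely generated projective R-modules. Set M = H ⧸ range φ. Then the torsion submodule T(M) of M admits a complement: there exists a submodule P of M with T(M) ⊓ P = ⊥, T(M) ⊔ P = M, and P is a projective R-module. In particular M is the direct sum of its torsion submodule and a finitely generated projective module. -/

import Mathlib

/-!
A nonzero finitely generated ideal `I` of a Prüfer domain `R` is invertible as a fractional ideal,
hence projective. Splitting off the image of the first coordinate, a finitely generated ideal,
shows by induction on `n` that every finitely generated submodule of `Rⁿ` is projective. A finitely
generated torsion-free module is isomorphic, via multiplication by a suitable nonzero scalar, to a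
submodule of the free span of a maximal independent family of its generators. Hence `M ⧸ T(M)` is
projective, the quotient map `M → M ⧸ T(M)` splits, and the image of a section is the complement.
-/

open Function Submodule

theorem Ideal.projective_of_mul_eq_span_singleton {R : Type*} [CommRing R] [IsDomain R]
    {I J : Ideal R} {c : R} (hc : c ≠ 0) (hIJ : I * J = Ideal.span {c}) :
    Module.Projective R I := by
  let ι := (Algebra.ofId R (FractionRing R)).toLinearMap
  have hunit : IsUnit (Submodule.map ι I) := by
    refine .of_mul_eq_one (Submodule.map ι J * Submodule.span R {(algebraMap R _ c)⁻¹}) ?_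
    rw [← mul_assoc, ← Submodule.map_mul, hIJ, Ideal.span, Submodule.map_span,
      Set.image_singleton, Submodule.span_mul_span, Set.singleton_mul_singleton]
    simp [hc, one_eq_span]
  have := projective_of_isUnit hunit
  exact .of_equiv (I.equivMapOfInjective ι (IsFractionRing.injective R _)).symm

theorem LinearMap.exists_isCompl_ker_of_surjective {R M N : Type*} [Ring R]
    [AddCommGroup M] [Module R M] [AddCommGroup N] [Module R N] [Module.Projective R N]
    (f : M →ₗ[R] N) (hf : Surjective f) :
    ∃ q : Submodule R M, IsCompl (ker f) q ∧ Nonempty (q ≃ₗ[R] N) := by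
  obtain ⟨l, hl⟩ := Module.projective_lifting_property f .id hf
  have hfl : ∀ y, f (l y) = y := LinearMap.congr_fun hl
  have hl_inj : Injective l := LeftInverse.injective hfl
  refine ⟨range l, IsCompl.symm ?_, ⟨(LinearEquiv.ofInjective l hl_inj).symm⟩⟩
  convert isCompl_of_proj (f := (l ∘ₗ f).codRestrict (range l) fun x ↦ mem_range_self l (f x))
    (by rintro ⟨_, y, rfl⟩; ext; simp [hfl]) using 1
  ext x
  simp [map_eq_zero_iff l hl_inj]

theorem Module.projective_of_injective_pi {R : Type*} [CommRing R]
    (hR : ∀ I : Ideal R, I.FG → Module.Projective R I) {n : ℕ} {X : Type*} [AddCommGroup X]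
    [Module R X] [Module.Finite R X] (ε : X →ₗ[R] Fin n → R) (hε : Function.Injective ε) :
    Module.Projective R X := by
  induction n generalizing X with
  | zero =>
    have : Subsingleton X := hε.subsingleton
    infer_instance
  | succ n ih =>
    let ε' : X →ₗ[R] R × (Fin n → R) := (Fin.consLinearEquiv R fun _ ↦ R).symm.toLinearMap ∘ₗ ε
    have hε' : Function.Injective ε' := by simpa [ε'] using hε
    let π := LinearMap.fst R R (Fin n → R) ∘ₗ ε'
    have : Module.Projective R (LinearMap.range π) := hR _ (Module.Finite.iff_fg.mp inferInstance)
    obtain ⟨q, hq, ⟨e⟩⟩ :=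
      π.rangeRestrict.exists_isCompl_ker_of_surjective π.surjective_rangeRestrict
    rw [LinearMap.ker_rangeRestrict] at hq
    have : Module.Finite R (LinearMap.ker π) := .of_surjective _ (projectionOnto_surjective hq)
    have : Module.Projective R (LinearMap.ker π) := by
      refine ih (LinearMap.snd R R (Fin n → R) ∘ₗ ε' ∘ₗ (LinearMap.ker π).subtype) fun x y hxy ↦ ?_
      exact Subtype.ext (hε' (Prod.ext (x.2.trans y.2.symm) hxy))
    have : Module.Projective R q := .of_equiv e.symm
    exact .of_equiv (prodEquivOfIsCompl _ _ hq)

theorem Submodule.exists_smul_mem_of_span_eq_top {R M : Type*} [CommRing R] [IsDomain R]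
    [AddCommGroup M] [Module R M] {ι : Type*} [Fintype ι] {s : ι → M}
    (hs : span R (Set.range s) = ⊤) (N : Submodule R M) (h : ∀ i, ∃ a : R, a ≠ 0 ∧ a • s i ∈ N) :
    ∃ a : R, a ≠ 0 ∧ ∀ x, a • x ∈ N := by
  classical
  choose a ha haN using h
  refine ⟨∏ i, a i, Finset.prod_ne_zero_iff.mpr fun i _ ↦ ha i, fun x ↦ ?_⟩
  suffices span R (Set.range s) ≤ N.comap (LinearMap.lsmul R M (∏ i, a i)) from
    this (hs ▸ mem_top : x ∈ span R (Set.range s))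
  rw [span_le]
  rintro _ ⟨i, rfl⟩
  rw [SetLike.mem_coe, mem_comap, LinearMap.lsmul_apply,
    ← Finset.prod_erase_mul _ _ (Finset.mem_univ i), mul_smul]
  exact N.smul_mem _ (haN i)

theorem Module.exists_injective_pi_of_isTorsionFree {R M : Type*} [CommRing R] [IsDomain R]
    [AddCommGroup M] [Module R M] [Module.Finite R M] [Module.IsTorsionFree R M] :
    ∃ (n : ℕ) (ε : M →ₗ[R] Fin n → R), Function.Injective ε := by
  obtain ⟨m, s, hs⟩ := Module.Finite.exists_fin (R := R) (M := M)
  obtain ⟨I, hI, hImax⟩ := exists_maximal_linearIndepOn R s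
  let N := span R (s '' I)
  obtain ⟨A, hA, hAN⟩ := N.exists_smul_mem_of_span_eq_top hs fun i ↦ by
    by_cases hi : i ∈ I
    · exact ⟨1, one_ne_zero, by simpa using subset_span (Set.mem_image_of_mem s hi)⟩
    · exact hImax i hi
  have : Module.Free R N := by
    rw [show N = span R (Set.range fun i : I ↦ s i) by rw [← Set.image_eq_range]]
    exact .of_basis (Basis.span hI)
  have : Module.Finite R N := Module.Finite.span_of_finite R (Set.toFinite _)
  let ε₀ : M →ₗ[R] N := (LinearMap.lsmul R M A).codRestrict N hAN
  refine ⟨_, (Module.finBasis R N).equivFun.toLinearMap ∘ₗ ε₀, fun x y hxy ↦ ?_⟩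
  exact smul_right_injective M hA
    (congrArg Subtype.val ((Module.finBasis R N).equivFun.injective hxy))

theorem Submodule.exists_isCompl_torsion_projective {R M : Type*} [CommRing R]
    [IsDomain R] [AddCommGroup M] [Module R M] [Module.Finite R M]
    (hR : ∀ I : Ideal R, I.FG → Module.Projective R I) :
    ∃ P : Submodule R M, IsCompl (torsion R M) P ∧ Module.Projective R P := by
  obtain ⟨n, ε, hε⟩ := Module.exists_injective_pi_of_isTorsionFree (R := R) (M := M ⧸ torsion R M)
  have := Module.projective_of_injective_pi hR ε hε
  obtain ⟨P, hP, ⟨e⟩⟩ := (torsion R M).mkQ.exists_isCompl_ker_of_surjective (mkQ_surjective _)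
  rw [ker_mkQ] at hP
  exact ⟨P, hP, .of_equiv e.symm⟩

theorem stmt_11_general {R : Type*} [CommRing R] [IsDomain R]
    (hpruf : ∀ I : Ideal R, I.FG → I ≠ ⊥ →
      ∃ (J : Ideal R) (c : R), J.FG ∧ c ≠ 0 ∧ I * J = Ideal.span {c})
    {E H : Type*} [AddCommGroup E] [Module R E] [AddCommGroup H] [Module R H]
    [Module.Finite R H]
    (φ : E →ₗ[R] H) :
    ∃ P : Submodule R (H ⧸ LinearMap.range φ),
      Submodule.torsion R (H ⧸ LinearMap.range φ) ⊓ P = ⊥ ∧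
      Submodule.torsion R (H ⧸ LinearMap.range φ) ⊔ P = ⊤ ∧
      Module.Projective R ↥P := by
  have hR : ∀ I : Ideal R, I.FG → Module.Projective R I := fun I hI ↦ by
    rcases eq_or_ne I ⊥ with rfl | hI₀
    · infer_instance
    obtain ⟨J, c, -, hc, hIJ⟩ := hpruf I hI hI₀
    exact Ideal.projective_of_mul_eq_span_singleton hc hIJ
  obtain ⟨P, hP, hPproj⟩ :=
    Submodule.exists_isCompl_torsion_projective (M := H ⧸ LinearMap.range φ) hR
  exact ⟨P, hP.inf_eq_bot, hP.sup_eq_top, hPproj⟩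

/-- Over a Prüfer domain, the cokernel of a linear map between finitely generated
projective modules is the direct sum of its torsion submodule and a projective module. -/
theorem stmt_11 {R : Type*} [CommRing R] [IsDomain R]
    (hpruf : ∀ I : Ideal R, I.FG → I ≠ ⊥ →
      ∃ (J : Ideal R) (c : R), J.FG ∧ c ≠ 0 ∧ I * J = Ideal.span {c})
    {E H : Type*} [AddCommGroup E] [Module R E] [AddCommGroup H] [Module R H]
    [Module.Finite R E] [Module.Projective R E]
    [Module.Finite R H] [Module.Projective R H]
    (φ : E →ₗ[R] H) :
    ∃ P : Submodule R (H ⧸ LinearMap.range φ),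
      Submodule.torsion R (H ⧸ LinearMap.range φ) ⊓ P = ⊥ ∧
      Submodule.torsion R (H ⧸ LinearMap.range φ) ⊔ P = ⊤ ∧
      Module.Projective R ↥P :=
  stmt_11_general hpruf φ
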